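/- arXiv:2310.01145 — 5 statements merged into one kernel-verified Lean document; each statement's English description precedes it below -/
import Mathlib

section
/- Let ν ∈ ℕ. For h ∈ ℝ let Φ̆(h) be the (ν+1)×(ν+1) real matrix with entries [Φ̆(h)]_{ij} = h^{j−i}/(j−i)! for 0 ≤ i ≤ j ≤ ν and 0 otherwise, and for h ≥ 0 let Q̆(h) be the (ν+1)×(ν+1) real matrix with entries [Q̆(h)]_{ij} = h^{2ν+1−i−j}/((2ν+1−i−j)(ν−i)!(ν−j)!). Then for all s, t ≥ 0, Q̆(s+t) = Φ̆(t) · Q̆(s) · Φ̆(t)ᵀ + Q̆(t). -/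
/-!
Write `Φ(h)` for the transition matrix and `g(τ) = Φ(τ) e_ν` for its last column. Then
`Q(h) = ∫₀ʰ g(τ) g(τ)ᵀ dτ`, entrywise an integral of two monomials. The binomial theorem gives the
semigroup law `Φ(t) Φ(τ) = Φ(t + τ)`, so `Φ(t) g(τ) = g(t + τ)` and
`Φ(t) Q(s) Φ(t)ᵀ = ∫₀ˢ g(t + τ) g(t + τ)ᵀ dτ = ∫ₜᵗ⁺ˢ g gᵀ`; adding `Q(t) = ∫₀ᵗ g gᵀ` gives
`Q(s + t)`.
-/

open Matrix Finset Nat intervalIntegral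

theorem add_pow_div_factorial {K : Type*} [Field K] [CharZero K] (x y : K) (n : ℕ) :
    (x + y) ^ n / n ! = ∑ m ∈ range (n + 1), x ^ m / m ! * (y ^ (n - m) / (n - m)!) := by
  rw [add_pow, sum_div]
  refine sum_congr rfl fun m hm => ?_
  rw [Nat.cast_choose K (Nat.lt_succ_iff.mp (mem_range.mp hm))]
  have : (n ! : K) ≠ 0 := Nat.cast_ne_zero.mpr n.factorial_ne_zero
  field_simp

noncomputable def iwpTransition (ν : ℕ) (h : ℝ) : Matrix (Fin (ν + 1)) (Fin (ν + 1)) ℝ :=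
  of fun i j => if (i : ℕ) ≤ j then h ^ ((j : ℕ) - i) / ((j : ℕ) - i)! else 0

theorem iwpTransition_add (ν : ℕ) (t τ : ℝ) :
    iwpTransition ν (t + τ) = iwpTransition ν t * iwpTransition ν τ := by
  ext i j
  simp only [iwpTransition, mul_apply, of_apply, ite_mul, zero_mul, mul_ite, mul_zero, ← ite_and]
  rw [Fin.sum_univ_eq_sum_range (fun k => if k ≤ (j : ℕ) ∧ (i : ℕ) ≤ k then
    t ^ (k - i) / (k - (i : ℕ))! * (τ ^ ((j : ℕ) - k) / ((j : ℕ) - k)!) else 0), ← sum_filter]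
  split_ifs with hij
  · have hIcc :
        (range (ν + 1)).filter (fun k => k ≤ (j : ℕ) ∧ (i : ℕ) ≤ k) = Ico (i : ℕ) (j + 1) := by
      ext k; simp only [mem_filter, mem_range, mem_Ico]; omega
    rw [hIcc, sum_Ico_eq_sum_range, Nat.sub_add_comm hij, add_pow_div_factorial]
    refine sum_congr rfl fun m _ => ?_
    rw [Nat.add_sub_cancel_left, Nat.sub_add_eq]
  · have hempty : (range (ν + 1)).filter (fun k => k ≤ (j : ℕ) ∧ (i : ℕ) ≤ k) = ∅ := by
      ext k; simp only [mem_filter, mem_range, notMem_empty, iff_false]; omega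
    rw [hempty, sum_empty]

noncomputable def gramIntegral {n : Type*} (f : ℝ → n → ℝ) (a b : ℝ) : Matrix n n ℝ :=
  of fun k l => ∫ τ in a..b, f τ k * f τ l

section gramIntegral

variable {m n : Type*} {f : ℝ → n → ℝ}

theorem mul_gramIntegral_mul_transpose [Fintype m] [Fintype n] (A : Matrix m n ℝ)
    (hf : Continuous f) (a b : ℝ) :
    A * gramIntegral f a b * Aᵀ = gramIntegral (fun τ => A *ᵥ f τ) a b := by
  ext i j
  have hcont : ∀ k l, Continuous fun τ => A i k * (f τ k * f τ l) * A j l := fun k l =>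
    (continuous_const.mul (((continuous_apply k).comp hf).mul
      ((continuous_apply l).comp hf))).mul continuous_const
  calc (A * gramIntegral f a b * Aᵀ) i j
      = ∑ k, ∑ l, ∫ τ in a..b, A i k * (f τ k * f τ l) * A j l := by
        simp only [mul_apply, transpose_apply, gramIntegral, of_apply, sum_mul,
          intervalIntegral.integral_const_mul, intervalIntegral.integral_mul_const]
        exact sum_comm
    _ = ∫ τ in a..b, ∑ k, ∑ l, A i k * (f τ k * f τ l) * A j l := by
        rw [integral_finsetSum (f := fun k τ => ∑ l, A i k * (f τ k * f τ l) * A j l)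
          fun k _ => (continuous_finsetSum _ fun l _ => hcont k l).intervalIntegrable a b]
        exact sum_congr rfl fun k _ =>
          (integral_finsetSum fun l _ => (hcont k l).intervalIntegrable a b).symm
    _ = (gramIntegral (fun τ => A *ᵥ f τ) a b) i j := by
        simp only [gramIntegral, of_apply, mulVec, dotProduct, sum_mul_sum]
        exact integral_congr fun τ _ => sum_congr rfl fun k _ => sum_congr rfl fun l _ => by ring

theorem gramIntegral_add_adjacent (hf : Continuous f) (a b c : ℝ) :
    gramIntegral f a b + gramIntegral f b c = gramIntegral f a c := by
  ext k l
  have hkl : Continuous fun τ => f τ k * f τ l :=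
    ((continuous_apply k).comp hf).mul ((continuous_apply l).comp hf)
  exact integral_add_adjacent_intervals (hkl.intervalIntegrable a b) (hkl.intervalIntegrable b c)

theorem gramIntegral_comp_add_left (t a b : ℝ) :
    gramIntegral (fun τ => f (t + τ)) a b = gramIntegral f (t + a) (t + b) := by
  ext k l
  exact integral_comp_add_left (fun τ => f τ k * f τ l) t

end gramIntegral

theorem integral_pow_div_factorial_mul_pow_div_factorial (c d : ℕ) (h : ℝ) :
    ∫ τ in (0 : ℝ)..h, τ ^ c / c ! * (τ ^ d / d !) =
      h ^ (c + d + 1) / ((c + d + 1) * c ! * d !) := by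
  rw [integral_congr (g := fun τ => τ ^ (c + d) / (c ! * d !)) fun τ _ => by
    simp only [pow_add]; ring]
  rw [integral_div, integral_pow]
  field_simp
  push_cast
  ring

theorem continuous_iwpTransition_column (ν : ℕ) (j : Fin (ν + 1)) :
    Continuous fun τ k => iwpTransition ν τ k j :=
  continuous_pi fun k => by
    simp only [iwpTransition, of_apply]
    split_ifs <;> fun_prop

theorem gramIntegral_iwpTransition_last_apply (ν : ℕ) (h : ℝ) (i j : Fin (ν + 1)) :
    gramIntegral (fun τ k => iwpTransition ν τ k (Fin.last ν)) 0 h i j =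
      h ^ (2 * ν + 1 - (i : ℕ) - j) /
        ((2 * ν + 1 - (i : ℕ) - j : ℕ) * (ν - (i : ℕ))! * (ν - (j : ℕ))!) := by
  have hdeg : 2 * ν + 1 - (i : ℕ) - j = (ν - i) + (ν - j) + 1 := by omega
  simp only [gramIntegral, iwpTransition, of_apply, Fin.val_last, if_pos (Fin.is_le i),
    if_pos (Fin.is_le j)]
  rw [integral_pow_div_factorial_mul_pow_div_factorial, hdeg]
  push_cast
  ring

/-- Chapman–Kolmogorov consistency of the `ν`-times integrated Wiener process:
`Q̆(s+t) = Φ̆(t) * Q̆(s) * Φ̆(t)ᵀ + Q̆(t)` for `s, t ≥ 0`. -/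
theorem iwp_covariance_chapman_kolmogorov (ν : ℕ)
    (Φ : ℝ → Matrix (Fin (ν + 1)) (Fin (ν + 1)) ℝ)
    (hΦ : ∀ (h : ℝ) (i j : Fin (ν + 1)),
      Φ h i j =
        if (i : ℕ) ≤ (j : ℕ) then
          h ^ ((j : ℕ) - (i : ℕ)) / Nat.factorial ((j : ℕ) - (i : ℕ))
        else 0)
    (Q : ℝ → Matrix (Fin (ν + 1)) (Fin (ν + 1)) ℝ)
    (hQ : ∀ (h : ℝ), 0 ≤ h → ∀ (i j : Fin (ν + 1)),
      Q h i j =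
        h ^ (2 * ν + 1 - (i : ℕ) - (j : ℕ)) /
          ((2 * ν + 1 - (i : ℕ) - (j : ℕ) : ℕ) *
            Nat.factorial (ν - (i : ℕ)) * Nat.factorial (ν - (j : ℕ))))
    (s t : ℝ) (hs : 0 ≤ s) (ht : 0 ≤ t) :
    Q (s + t) = Φ t * Q s * (Φ t)ᵀ + Q t := by
  set g : ℝ → Fin (ν + 1) → ℝ := fun τ k => iwpTransition ν τ k (Fin.last ν)
  have hg : Continuous g := continuous_iwpTransition_column ν (Fin.last ν)
  have hΦ_eq : Φ = iwpTransition ν := funext fun h => ext fun i j => hΦ h i j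
  have hQ_eq : ∀ h, 0 ≤ h → Q h = gramIntegral g 0 h := fun h hh =>
    ext fun i j => (hQ h hh i j).trans (gramIntegral_iwpTransition_last_apply ν h i j).symm
  have hflow : (fun τ => iwpTransition ν t *ᵥ g τ) = fun τ => g (t + τ) := by
    ext τ k
    simp only [g, iwpTransition_add]
    rfl
  rw [hQ_eq _ (add_nonneg hs ht), hQ_eq s hs, hQ_eq t ht, hΦ_eq,
    mul_gramIntegral_mul_transpose _ hg, hflow, gramIntegral_comp_add_left, add_zero,
    add_comm s t, add_comm (gramIntegral g t _), gramIntegral_add_adjacent hg]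
end

section
/- Fix n ∈ ℕ and consider triples (E, g, P) with E an n×n real matrix, g ∈ ℝⁿ, and P an n×n real matrix. Define the binary operation (E_i, g_i, P_i) ⊗ₛ (E_j, g_j, P_j) := (E_i·E_j, E_i·g_j + g_i, E_i·P_j·E_iᵀ + P_i). Then ⊗ₛ is associative: for all triples b₁, b₂, b₃, (b₁ ⊗ₛ b₂) ⊗ₛ b₃ = b₁ ⊗ₛ (b₂ ⊗ₛ b₃). -/
open Matrix

/-- A smoothing element: an affine-Gaussian conditional `N(E y + g, P)`
parameterized by `(E, g, P)`. -/
def smoothingOp (n : ℕ)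
    (bi bj : Matrix (Fin n) (Fin n) ℝ × (Fin n → ℝ) × Matrix (Fin n) (Fin n) ℝ) :
    Matrix (Fin n) (Fin n) ℝ × (Fin n → ℝ) × Matrix (Fin n) (Fin n) ℝ :=
  (bi.1 * bj.1, bi.1 *ᵥ bj.2.1 + bi.2.1, bi.1 * bj.2.2 * bi.1ᵀ + bi.2.2)

/-! The pair `(E, g)` composes as the affine maps `y ↦ E y + g`, and `P` is pushed forward
by the congruence `P ↦ E P Eᵀ`, which is additive and compatible with matrix multiplication;
these three facts together give associativity. -/

namespace Matrix

variable {l m k R : Type*} [Fintype m] [Fintype k]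

theorem mulVec_mulVec_add_add [NonUnitalSemiring R] (E₁ : Matrix l m R) (E₂ : Matrix m k R)
    (g₁ : l → R) (g₂ : m → R) (g₃ : k → R) :
    E₁ *ᵥ (E₂ *ᵥ g₃ + g₂) + g₁ = (E₁ * E₂) *ᵥ g₃ + (E₁ *ᵥ g₂ + g₁) := by
  rw [mulVec_add, mulVec_mulVec, add_assoc]

theorem mul_add_mul_transpose [NonUnitalNonAssocSemiring R] (A : Matrix l m R)
    (P Q : Matrix m m R) : A * (P + Q) * Aᵀ = A * P * Aᵀ + A * Q * Aᵀ := by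
  rw [Matrix.mul_add, Matrix.add_mul]

theorem mul_mul_transpose_mul [CommSemiring R] (A : Matrix l m R) (B : Matrix m k R)
    (P : Matrix k k R) : A * B * P * (A * B)ᵀ = A * (B * P * Bᵀ) * Aᵀ := by
  simp only [transpose_mul, Matrix.mul_assoc]

end Matrix

/-- The associative smoothing operator of the time-parallel Rauch–Tung–Striebel
smoother is associative. -/
theorem smoothingOp_assoc (n : ℕ)
    (b₁ b₂ b₃ : Matrix (Fin n) (Fin n) ℝ × (Fin n → ℝ) × Matrix (Fin n) (Fin n) ℝ) :
    smoothingOp n (smoothingOp n b₁ b₂) b₃ = smoothingOp n b₁ (smoothingOp n b₂ b₃) := by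
  obtain ⟨E₁, g₁, P₁⟩ := b₁
  obtain ⟨E₂, g₂, P₂⟩ := b₂
  obtain ⟨E₃, g₃, P₃⟩ := b₃
  simp only [smoothingOp, Prod.mk.injEq]
  refine ⟨Matrix.mul_assoc E₁ E₂ E₃, (mulVec_mulVec_add_add E₁ E₂ g₁ g₂ g₃).symm, ?_⟩
  rw [mul_add_mul_transpose, mul_mul_transpose_mul, add_assoc]
end

section
/- Let C and J be n×n real positive semidefinite (symmetric) matrices. Then the matrix I + C·J is invertible. -/
/-!
Write `C = Bᴴ B`. By the Weinstein–Aronszajn identity `det (1 + Bᴴ (B J)) = det (1 + (B J) Bᴴ)`,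
and `1 + B J Bᴴ` is positive definite, being the identity plus a congruence of `J`.
-/

open Matrix

open scoped ComplexOrder MatrixOrder

theorem Matrix.isUnit_one_add_mul_comm {m n α : Type*} [Fintype m] [Fintype n] [DecidableEq m]
    [DecidableEq n] [CommRing α] (A : Matrix m n α) (B : Matrix n m α) :
    IsUnit (1 + A * B) ↔ IsUnit (1 + B * A) := by
  rw [isUnit_iff_isUnit_det, isUnit_iff_isUnit_det, det_one_add_mul_comm]

theorem Matrix.PosSemidef.isUnit_one_add_mul {n 𝕜 : Type*} [Fintype n] [DecidableEq n] [RCLike 𝕜]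
    {C J : Matrix n n 𝕜} (hC : C.PosSemidef) (hJ : J.PosSemidef) : IsUnit (1 + C * J) := by
  obtain ⟨B, rfl⟩ := CStarAlgebra.nonneg_iff_eq_star_mul_self.mp hC.nonneg
  have hpos : (1 + B * J * Bᴴ).PosDef := PosDef.one.add_posSemidef (hJ.mul_mul_conjTranspose_same B)
  rw [star_eq_conjTranspose, mul_assoc, isUnit_one_add_mul_comm]
  exact hpos.isUnit

/-- For positive semidefinite real matrices `C` and `J`, the matrix `I + C * J`
is invertible. -/
theorem isUnit_one_add_psd_mul_psd (n : ℕ) (C J : Matrix (Fin n) (Fin n) ℝ)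
    (hC : C.PosSemidef) (hJ : J.PosSemidef) :
    IsUnit (1 + C * J) :=
  hC.isUnit_one_add_mul hJ
end

section
/- Let J be an n×n real positive semidefinite (symmetric) matrix, let L be an n×p real matrix, and set C = L·Lᵀ. Then I + C·J and I_p + Lᵀ·J·L are invertible and (I + C·J)^{-1}·C = L·(I_p + Lᵀ·J·L)^{-1}·Lᵀ. -/
/-!
`1 + Lᵀ J L` is positive definite, hence invertible, and by the Weinstein–Aronszajn identity
`det (1 + A B) = det (1 + B A)` with `A = L`, `B = Lᵀ J` so is `1 + C J`. The identity itself is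
the push-through relation `(1 + A B) A = A (1 + B A)`, multiplied on the right by `Lᵀ`.
-/

open Matrix

namespace Matrix

section PushThrough

variable {m n R : Type*} [Fintype m] [Fintype n] [DecidableEq m] [DecidableEq n] [CommRing R]

theorem isUnit_one_add_mul_comm_s9 (A : Matrix m n R) (B : Matrix n m R) :
    IsUnit (1 + A * B) ↔ IsUnit (1 + B * A) := by
  rw [isUnit_iff_isUnit_det, isUnit_iff_isUnit_det, det_one_add_mul_comm]

theorem one_add_mul_mul_eq_mul_one_add_mul (A : Matrix m n R) (B : Matrix n m R) :
    (1 + A * B) * A = A * (1 + B * A) := by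
  rw [Matrix.add_mul, Matrix.mul_add, Matrix.one_mul, Matrix.mul_one, Matrix.mul_assoc]

/-- No invertibility hypothesis is needed: by the Weinstein–Aronszajn identity the two inverses
are either both genuine or both the junk value `0`. -/
theorem inv_one_add_mul_mul_eq_mul_inv_one_add_mul (A : Matrix m n R) (B : Matrix n m R) :
    (1 + A * B)⁻¹ * A = A * (1 + B * A)⁻¹ := by
  by_cases hBA : IsUnit (1 + B * A)
  · have := hBA.invertible
    have := ((isUnit_one_add_mul_comm_s9 A B).2 hBA).invertible
    rw [inv_mul_eq_iff_eq_mul_of_invertible, ← Matrix.mul_assoc,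
      one_add_mul_mul_eq_mul_one_add_mul, Matrix.mul_assoc, mul_inv_of_invertible,
      Matrix.mul_one]
  · have hAB : ¬IsUnit (1 + A * B) := mt (isUnit_one_add_mul_comm_s9 A B).1 hBA
    rw [isUnit_iff_isUnit_det] at hAB hBA
    rw [nonsing_inv_apply_not_isUnit _ hAB, nonsing_inv_apply_not_isUnit _ hBA,
      Matrix.zero_mul, Matrix.mul_zero]

end PushThrough

theorem PosSemidef.posDef_one_add_transpose_mul_mul {m n : Type*} [Fintype m] [Fintype n]
    [DecidableEq m] {J : Matrix n n ℝ} (hJ : J.PosSemidef) (L : Matrix n m ℝ) :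
    (1 + Lᵀ * J * L).PosDef :=
  PosDef.one.add_posSemidef (by
    simpa only [conjTranspose_eq_transpose_of_trivial] using hJ.conjTranspose_mul_mul_same L)

end Matrix

/-- Push-through identity underlying the square-root form of the associative
filtering operator: for PSD `J` and `C = L * Lᵀ`, both `I + C * J` and
`I + Lᵀ * J * L` are invertible, and
`(I + C * J)⁻¹ * C = L * (I + Lᵀ * J * L)⁻¹ * Lᵀ`. -/
theorem psd_push_through (n p : ℕ) (J : Matrix (Fin n) (Fin n) ℝ)
    (hJ : J.PosSemidef) (L : Matrix (Fin n) (Fin p) ℝ)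
    (C : Matrix (Fin n) (Fin n) ℝ) (hC : C = L * Lᵀ) :
    IsUnit (1 + C * J) ∧ IsUnit ((1 : Matrix (Fin p) (Fin p) ℝ) + Lᵀ * J * L) ∧
      (1 + C * J)⁻¹ * C = L * ((1 : Matrix (Fin p) (Fin p) ℝ) + Lᵀ * J * L)⁻¹ * Lᵀ := by
  subst hC
  have hK : IsUnit (1 + Lᵀ * J * L) := (hJ.posDef_one_add_transpose_mul_mul L).isUnit
  have hCJ : IsUnit (1 + L * Lᵀ * J) := by
    rwa [Matrix.mul_assoc, isUnit_one_add_mul_comm_s9]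
  refine ⟨hCJ, hK, ?_⟩
  rw [Matrix.mul_assoc L Lᵀ J, ← Matrix.mul_assoc, inv_one_add_mul_mul_eq_mul_inv_one_add_mul,
    Matrix.mul_assoc Lᵀ J L]
end

section
/- Let P be an n×n real matrix with P = U·Uᵀ for some n×p real matrix U, let R be an m×m real matrix with R = V·Vᵀ for some m×q real matrix V, and let H be an m×n real matrix. Suppose Ψ11 (m×m), Ψ21 (n×m), Ψ22 (n×n) are real matrices satisfying the block Gram identities Ψ11·Ψ11ᵀ = H·P·Hᵀ + R, Ψ21·Ψ11ᵀ = P·Hᵀ, and Ψ21·Ψ21ᵀ + Ψ22·Ψ22ᵀ = P (these hold for the blocks of the block-lower-triangular matrix tria([[H·U, V],[U, 0]])). If Ψ11 is invertible, then, writing S := H·P·Hᵀ + R and K := Ψ21·Ψ11^{-1}, one has K = P·Hᵀ·S^{-1} and Ψ22·Ψ22ᵀ = P − P·Hᵀ·S^{-1}·H·P. -/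
open Matrix

/-!
With `S = Ψ11 Ψ11ᵀ` and `Ψ21 Ψ11ᵀ = P Hᵀ`, the gain is `P Hᵀ S⁻¹ = Ψ21 Ψ11ᵀ Ψ11⁻ᵀ Ψ11⁻¹ = Ψ21 Ψ11⁻¹`.
Writing `Ψ21 = K Ψ11` then gives `Ψ21 Ψ21ᵀ = K (Ψ21 Ψ11ᵀ)ᵀ = K H P`, so the covariance identity
is the Gram identity `Ψ21 Ψ21ᵀ + Ψ22 Ψ22ᵀ = P` solved for `Ψ22 Ψ22ᵀ`.
-/

namespace Matrix

variable {ι κ α : Type*} [Fintype ι] [DecidableEq ι] [CommRing α]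
  {L : Matrix ι ι α} {X Y : Matrix κ ι α}

theorem mul_inv_eq_mul_inv_mul_transpose_self (hL : IsUnit L) (h : X * Lᵀ = Y) :
    X * L⁻¹ = Y * (L * Lᵀ)⁻¹ := by
  have hLT : IsUnit Lᵀ.det := isUnit_det_transpose L ((isUnit_iff_isUnit_det L).mp hL)
  rw [mul_inv_rev, ← h, ← Matrix.mul_assoc, mul_nonsing_inv_cancel_right _ _ hLT]

theorem mul_transpose_self_eq_mul_inv_mul_transpose (hL : IsUnit L) (h : X * Lᵀ = Y) :
    X * Xᵀ = X * L⁻¹ * Yᵀ := by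
  rw [← h, transpose_mul, transpose_transpose, Matrix.mul_assoc,
    nonsing_inv_mul_cancel_left _ _ ((isUnit_iff_isUnit_det L).mp hL)]

end Matrix

theorem sqrt_kalman_update_general (n m : ℕ)
    (P : Matrix (Fin n) (Fin n) ℝ)
    (R : Matrix (Fin m) (Fin m) ℝ)
    (H : Matrix (Fin m) (Fin n) ℝ)
    (Ψ11 : Matrix (Fin m) (Fin m) ℝ)
    (Ψ21 : Matrix (Fin n) (Fin m) ℝ)
    (Ψ22 : Matrix (Fin n) (Fin n) ℝ)
    (h11 : Ψ11 * Ψ11ᵀ = H * P * Hᵀ + R)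
    (h21 : Ψ21 * Ψ11ᵀ = P * Hᵀ)
    (h22 : Ψ21 * Ψ21ᵀ + Ψ22 * Ψ22ᵀ = P)
    (hinv : IsUnit Ψ11)
    (S : Matrix (Fin m) (Fin m) ℝ) (hS : S = H * P * Hᵀ + R)
    (K : Matrix (Fin n) (Fin m) ℝ) (hK : K = Ψ21 * Ψ11⁻¹) :
    K = P * Hᵀ * S⁻¹ ∧ Ψ22 * Ψ22ᵀ = P - P * Hᵀ * S⁻¹ * H * P := by
  have hPsymm : Pᵀ = P := by
    rw [← h22, transpose_add, transpose_mul, transpose_mul, transpose_transpose,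
      transpose_transpose]
  have hgain : K = P * Hᵀ * S⁻¹ := by
    rw [hK, hS, ← h11]
    exact mul_inv_eq_mul_inv_mul_transpose_self hinv h21
  refine ⟨hgain, ?_⟩
  rw [eq_sub_of_add_eq' h22, mul_transpose_self_eq_mul_inv_mul_transpose hinv h21, ← hK, hgain,
    transpose_mul, transpose_transpose, hPsymm, Matrix.mul_assoc _ H]

/-- In the square-root Kalman update, the blocks `Ψ11, Ψ21, Ψ22` of the
triangularization satisfy: the gain `K = Ψ21 * Ψ11⁻¹` equals the standard
Kalman gain `P Hᵀ S⁻¹`, and `Ψ22 * Ψ22ᵀ` equals the standard updated covariance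
`P − P Hᵀ S⁻¹ H P`. -/
theorem sqrt_kalman_update (n m p q : ℕ)
    (P : Matrix (Fin n) (Fin n) ℝ) (U : Matrix (Fin n) (Fin p) ℝ)
    (hP : P = U * Uᵀ)
    (R : Matrix (Fin m) (Fin m) ℝ) (V : Matrix (Fin m) (Fin q) ℝ)
    (hR : R = V * Vᵀ)
    (H : Matrix (Fin m) (Fin n) ℝ)
    (Ψ11 : Matrix (Fin m) (Fin m) ℝ)
    (Ψ21 : Matrix (Fin n) (Fin m) ℝ)
    (Ψ22 : Matrix (Fin n) (Fin n) ℝ)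
    (h11 : Ψ11 * Ψ11ᵀ = H * P * Hᵀ + R)
    (h21 : Ψ21 * Ψ11ᵀ = P * Hᵀ)
    (h22 : Ψ21 * Ψ21ᵀ + Ψ22 * Ψ22ᵀ = P)
    (hinv : IsUnit Ψ11)
    (S : Matrix (Fin m) (Fin m) ℝ) (hS : S = H * P * Hᵀ + R)
    (K : Matrix (Fin n) (Fin m) ℝ) (hK : K = Ψ21 * Ψ11⁻¹) :
    K = P * Hᵀ * S⁻¹ ∧ Ψ22 * Ψ22ᵀ = P - P * Hᵀ * S⁻¹ * H * P :=
  sqrt_kalman_update_general n m P R H Ψ11 Ψ21 Ψ22 h11 h21 h22 hinv S hS K hK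
end
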